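/- Weighted radial Hardy inequality: let δ > 0, η = 1/2 + δ, and let u : [0,∞) → ℝ be C¹ with compact support. Then ∫_0^∞ (1+ρ)^{2η−2} u(ρ)² ρ² dρ ≤ C(1 + δ^{-1})² ( ∫_0^∞ (1+ρ)^{2η} u'(ρ)² ρ² dρ + ∫_0^1 u(ρ)² ρ² dρ ) for a universal constant C. -/

import Mathlib

/-!
With `φ = ρ² (1 + ρ)^{2δ} u²`, which vanishes at `ρ = 0` and for large `ρ`, one has `∫₀^∞ φ' = 0`.
Writing `φ'` out and completing the square against the weight `(1 + ρ)^{2δ-1}` gives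
`δ² ∫ (1 + ρ)^{2δ-1} u² ρ² ≤ ∫ (1 + ρ)^{2δ+1} u'² ρ²`, so the constant `C = 1` works.
-/

open MeasureTheory Set

theorem continuousOn_one_add_rpow (p : ℝ) : ContinuousOn (fun ρ : ℝ => (1 + ρ) ^ p) (Ici 0) :=
  (continuousOn_const.add continuousOn_id).rpow_const fun x hx =>
    Or.inl (show (1 : ℝ) + x ≠ 0 by linarith [mem_Ici.mp hx])

theorem setIntegral_Ioi_eq_intervalIntegral {f : ℝ → ℝ} {a R : ℝ} (haR : a ≤ R)
    (hf : ∀ x, R < x → f x = 0) : ∫ x in Ioi a, f x = ∫ x in a..R, f x := by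
  rw [intervalIntegral.integral_of_le haR]
  refine setIntegral_eq_of_subset_of_forall_sdiff_eq_zero measurableSet_Ioi Ioc_subset_Ioi_self ?_
  rintro x ⟨hax, hx⟩
  exact hf x (by simpa [mem_Ioi.mp hax] using hx)

theorem hasDerivAt_sq_mul_one_add_rpow_mul_sq {u : ℝ → ℝ} {u' δ x : ℝ} (hx : 1 + x ≠ 0)
    (hu : HasDerivAt u u' x) :
    HasDerivAt (fun ρ => ρ ^ 2 * (1 + ρ) ^ (2 * δ) * u ρ ^ 2)
      ((1 + x) ^ (2 * δ - 1) *
        (2 * x * (1 + x + δ * x) * u x ^ 2 + 2 * x ^ 2 * (1 + x) * u x * u')) x := by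
  have hw : HasDerivAt (fun ρ : ℝ => (1 + ρ) ^ (2 * δ)) (1 * (2 * δ) * (1 + x) ^ (2 * δ - 1)) x :=
    ((hasDerivAt_id x).const_add 1).rpow_const (Or.inl hx)
  have hsplit : (1 + x) ^ (2 * δ) = (1 + x) ^ (2 * δ - 1) * (1 + x) := by
    rw [← Real.rpow_add_one hx, sub_add_cancel]
  refine (((hasDerivAt_pow 2 x).fun_mul hw).fun_mul (hu.fun_pow 2)).congr_deriv ?_
  rw [hsplit]
  ring

/-- Completing the square: the difference of the two sides is
`w * ((δ * x * a + (1 + x) * x * b) ^ 2 + 2 * δ * x * (1 + x) * a ^ 2)`. -/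
theorem hardy_pointwise {δ x w : ℝ} (a b : ℝ) (hδ : 0 ≤ δ) (hx : 0 ≤ x) (hw : 0 ≤ w) :
    δ ^ 2 * (w * a ^ 2 * x ^ 2) ≤
      δ * (w * (2 * x * (1 + x + δ * x) * a ^ 2 + 2 * x ^ 2 * (1 + x) * a * b))
        + w * (1 + x) ^ 2 * b ^ 2 * x ^ 2 := by
  nlinarith [mul_nonneg hw (sq_nonneg (δ * x * a + (1 + x) * x * b)),
    mul_nonneg (mul_nonneg (mul_nonneg (mul_nonneg hδ hx) (by linarith : 0 ≤ 1 + x)) hw)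
      (sq_nonneg a)]

theorem radial_hardy {δ : ℝ} (hδ : 0 ≤ δ) {u : ℝ → ℝ} (hu : ContDiff ℝ 1 u)
    (hc : HasCompactSupport u) :
    δ ^ 2 * ∫ ρ in Ioi 0, (1 + ρ) ^ (2 * δ - 1) * u ρ ^ 2 * ρ ^ 2 ≤
      ∫ ρ in Ioi 0, (1 + ρ) ^ (2 * δ + 1) * deriv u ρ ^ 2 * ρ ^ 2 := by
  obtain ⟨R₀, hR₀, hu₀⟩ := hc.exists_pos_le_norm
  obtain ⟨R₁, -, hu₁⟩ := hc.deriv.exists_pos_le_norm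
  set R := max R₀ R₁
  have hR : 0 ≤ R := hR₀.le.trans (le_max_left _ _)
  have hvanish : ∀ x, R ≤ x → u x = 0 ∧ deriv u x = 0 := fun x hx =>
    ⟨hu₀ x ((le_max_left _ _).trans (hx.trans (Real.le_norm_self x))),
      hu₁ x ((le_max_right _ _).trans (hx.trans (Real.le_norm_self x)))⟩
  have hucont := hu.continuous
  have hu'cont := hu.continuous_deriv le_rfl
  set D := fun x : ℝ => (1 + x) ^ (2 * δ - 1) *
    (2 * x * (1 + x + δ * x) * u x ^ 2 + 2 * x ^ 2 * (1 + x) * u x * deriv u x)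
  have hsub : uIcc 0 R ⊆ Ici 0 := by
    rw [uIcc_of_le hR]; exact Icc_subset_Ici_self
  have intOn {f : ℝ → ℝ} (hf : ContinuousOn f (Ici 0)) : IntervalIntegrable f volume 0 R :=
    (hf.mono hsub).intervalIntegrable
  have hw := continuousOn_one_add_rpow (2 * δ - 1)
  have hw' := continuousOn_one_add_rpow (2 * δ + 1)
  -- `ρ ^ 2 * (1 + ρ) ^ (2 * δ) * u ρ ^ 2` vanishes at both ends of `[0, R]`
  have hD : ∫ x in 0..R, D x = 0 := by
    rw [intervalIntegral.integral_eq_sub_of_hasDerivAt (fun x hx =>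
      hasDerivAt_sq_mul_one_add_rpow_mul_sq (by linarith [mem_Ici.mp (hsub hx)])
        (hu.differentiable one_ne_zero x).hasDerivAt) (intOn (by fun_prop))]
    simp [(hvanish R le_rfl).1]
  rw [setIntegral_Ioi_eq_intervalIntegral hR fun x hx => by simp [(hvanish x hx.le).1],
    setIntegral_Ioi_eq_intervalIntegral hR fun x hx => by simp [(hvanish x hx.le).2],
    ← intervalIntegral.integral_const_mul]
  calc ∫ x in 0..R, δ ^ 2 * ((1 + x) ^ (2 * δ - 1) * u x ^ 2 * x ^ 2)
      ≤ ∫ x in 0..R, δ * D x + (1 + x) ^ (2 * δ + 1) * deriv u x ^ 2 * x ^ 2 := by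
        refine intervalIntegral.integral_mono_on hR (intOn (by fun_prop))
          ((intOn (by fun_prop)).const_mul δ |>.add (intOn (by fun_prop))) fun x hx => ?_
        have hx1 : 0 < 1 + x := by linarith [hx.1]
        rw [show 2 * δ + 1 = 2 * δ - 1 + 2 by ring, Real.rpow_add hx1, Real.rpow_two]
        exact hardy_pointwise _ _ hδ hx.1 (Real.rpow_nonneg hx1.le _)
    _ = ∫ x in 0..R, (1 + x) ^ (2 * δ + 1) * deriv u x ^ 2 * x ^ 2 := by
        rw [intervalIntegral.integral_add ((intOn (by fun_prop)).const_mul δ) (intOn (by fun_prop)),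
          intervalIntegral.integral_const_mul, hD, mul_zero, zero_add]

/-- Weighted radial Hardy inequality: for η = 1/2 + δ and compactly supported C¹
functions u on [0,∞),
`∫₀^∞ (1+ρ)^{2η−2} u² ρ² dρ ≤ C (1+δ⁻¹)² (∫₀^∞ (1+ρ)^{2η} u'² ρ² dρ + ∫₀¹ u² ρ² dρ)`
for a universal constant C. -/
theorem stmt16 : ∃ C : ℝ, 0 < C ∧
    ∀ (δ : ℝ), 0 < δ → ∀ u : ℝ → ℝ, ContDiff ℝ 1 u → HasCompactSupport u →
      (∫ ρ in Set.Ioi (0 : ℝ),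
          (1 + ρ) ^ (2 * (1 / 2 + δ) - 2) * (u ρ) ^ 2 * ρ ^ 2)
        ≤ C * (1 + δ⁻¹) ^ 2 *
          ((∫ ρ in Set.Ioi (0 : ℝ),
              (1 + ρ) ^ (2 * (1 / 2 + δ)) * (deriv u ρ) ^ 2 * ρ ^ 2)
            + ∫ ρ in Set.Ioc (0 : ℝ) 1, (u ρ) ^ 2 * ρ ^ 2) := by
  refine ⟨1, one_pos, fun δ hδ u hu hc => ?_⟩
  have hardy := radial_hardy hδ.le hu hc
  rw [show 2 * (1 / 2 + δ) - 2 = 2 * δ - 1 by ring, show 2 * (1 / 2 + δ) = 2 * δ + 1 by ring]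
  set I := ∫ ρ in Ioi 0, (1 + ρ) ^ (2 * δ - 1) * u ρ ^ 2 * ρ ^ 2
  set J := ∫ ρ in Ioi 0, (1 + ρ) ^ (2 * δ + 1) * deriv u ρ ^ 2 * ρ ^ 2
  set K := ∫ ρ in Ioc 0 1, u ρ ^ 2 * ρ ^ 2
  have hJ : 0 ≤ J := setIntegral_nonneg measurableSet_Ioi fun ρ hρ => by
    have : 0 < ρ := hρ
    positivity
  have hK : 0 ≤ K := setIntegral_nonneg measurableSet_Ioc fun ρ _ => by positivity
  calc I = δ⁻¹ ^ 2 * (δ ^ 2 * I) := by field_simp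
    _ ≤ δ⁻¹ ^ 2 * J := by gcongr
    _ ≤ 1 * (1 + δ⁻¹) ^ 2 * (J + K) := by
        rw [one_mul]
        gcongr
        · linarith [inv_pos.mpr hδ]
        · linarith
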